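/- Gerbe terms for gluing quivers with different numbers of vertices: work in A' := 𝔸^q⟨b_1^{-1}, b_3^{-1}⟩ and define, for each arrow g, the element F(g) := G_{03}(G_{30}(g)) ∈ A' obtained by substituting z ↦ a_1b_1^{-1}, x ↦ c_1b_1^{-1}, w ↦ b_1b_3b_2 into the word G_{30}(g); explicitly F(a_1) = a_1b_1^{-1}, F(b_1) = e_2, F(c_1) = c_1b_1^{-1}, F(a_2) = q·(b_1b_3b_2)(a_1b_1^{-1}), F(b_2) = b_1b_3b_2, F(c_2) = q^{-1}·(b_1b_3b_2)(c_1b_1^{-1}), F(a_3) = q^{-1}·a_1b_1^{-1}, F(b_3) = e_2, F(c_3) = q·c_1b_1^{-1}. Set c_{030}(1) := b_1, c_{030}(2) := e_2, c_{030}(3) := b_1b_3. Then for every arrow g ∈ {a_1, b_1, c_1, a_2, b_2, c_2, a_3, b_3, c_3}, the gerbe identity F(g) · c_{030}(t(g)) = c_{030}(h(g)) · g holds in A' (equivalently, G_{03} ∘ G_{30}(g) = c_{030}(h(g)) · g · c_{030}(t(g))^{-1}). -/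

import Mathlib

/-! Statement 14: gerbe terms for gluing quivers with different numbers of vertices. -/

/-- Generators of the quiver algebra `𝔸^q` localized at `b₁, b₃`. -/
inductive QGen : Type
  | e1 | e2 | e3
  | a1 | a2 | a3 | b1 | b2 | b3 | c1 | c2 | c3
  | ib1 | ib3
deriving DecidableEq

open QGen

/-- Defining relations of `𝔸^q⟨b₁⁻¹, b₃⁻¹⟩` inside the free algebra. -/
inductive QRel (K : Type) [CommRing K] (q : Kˣ) :
    FreeAlgebra K QGen → FreeAlgebra K QGen → Prop
  | sum : QRel K q (FreeAlgebra.ι K e1 + FreeAlgebra.ι K e2 + FreeAlgebra.ι K e3) 1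
  | orth (u v : QGen) : u ≠ v → u ∈ [e1, e2, e3] → v ∈ [e1, e2, e3] →
      QRel K q (FreeAlgebra.ι K u * FreeAlgebra.ι K v) 0
  | idem (u : QGen) : u ∈ [e1, e2, e3] →
      QRel K q (FreeAlgebra.ι K u * FreeAlgebra.ι K u) (FreeAlgebra.ι K u)
  | cor_a1 : QRel K q (FreeAlgebra.ι K a1)
      (FreeAlgebra.ι K e2 * FreeAlgebra.ι K a1 * FreeAlgebra.ι K e1)
  | cor_b1 : QRel K q (FreeAlgebra.ι K b1)
      (FreeAlgebra.ι K e2 * FreeAlgebra.ι K b1 * FreeAlgebra.ι K e1)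
  | cor_c1 : QRel K q (FreeAlgebra.ι K c1)
      (FreeAlgebra.ι K e2 * FreeAlgebra.ι K c1 * FreeAlgebra.ι K e1)
  | cor_a2 : QRel K q (FreeAlgebra.ι K a2)
      (FreeAlgebra.ι K e3 * FreeAlgebra.ι K a2 * FreeAlgebra.ι K e2)
  | cor_b2 : QRel K q (FreeAlgebra.ι K b2)
      (FreeAlgebra.ι K e3 * FreeAlgebra.ι K b2 * FreeAlgebra.ι K e2)
  | cor_c2 : QRel K q (FreeAlgebra.ι K c2)
      (FreeAlgebra.ι K e3 * FreeAlgebra.ι K c2 * FreeAlgebra.ι K e2)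
  | cor_a3 : QRel K q (FreeAlgebra.ι K a3)
      (FreeAlgebra.ι K e1 * FreeAlgebra.ι K a3 * FreeAlgebra.ι K e3)
  | cor_b3 : QRel K q (FreeAlgebra.ι K b3)
      (FreeAlgebra.ι K e1 * FreeAlgebra.ι K b3 * FreeAlgebra.ι K e3)
  | cor_c3 : QRel K q (FreeAlgebra.ι K c3)
      (FreeAlgebra.ι K e1 * FreeAlgebra.ι K c3 * FreeAlgebra.ι K e3)
  | r1 : QRel K q (FreeAlgebra.ι K a3 * FreeAlgebra.ι K b2)
      ((q : K) • (FreeAlgebra.ι K b3 * FreeAlgebra.ι K a2))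
  | r2 : QRel K q (FreeAlgebra.ι K a1 * FreeAlgebra.ι K b3)
      ((q : K) • (FreeAlgebra.ι K b1 * FreeAlgebra.ι K a3))
  | r3 : QRel K q (FreeAlgebra.ι K a2 * FreeAlgebra.ι K b1)
      ((q : K) • (FreeAlgebra.ι K b2 * FreeAlgebra.ι K a1))
  | r4 : QRel K q (FreeAlgebra.ι K b2 * FreeAlgebra.ι K c1)
      ((q : K) • (FreeAlgebra.ι K c2 * FreeAlgebra.ι K b1))
  | r5 : QRel K q (FreeAlgebra.ι K b3 * FreeAlgebra.ι K c2)
      ((q : K) • (FreeAlgebra.ι K c3 * FreeAlgebra.ι K b2))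
  | r6 : QRel K q (FreeAlgebra.ι K b1 * FreeAlgebra.ι K c3)
      ((q : K) • (FreeAlgebra.ι K c1 * FreeAlgebra.ι K b3))
  | r7 : QRel K q (FreeAlgebra.ι K c1 * FreeAlgebra.ι K a3)
      ((q : K) • (FreeAlgebra.ι K a1 * FreeAlgebra.ι K c3))
  | r8 : QRel K q (FreeAlgebra.ι K c2 * FreeAlgebra.ι K a1)
      ((q : K) • (FreeAlgebra.ι K a2 * FreeAlgebra.ι K c1))
  | r9 : QRel K q (FreeAlgebra.ι K c3 * FreeAlgebra.ι K a2)
      ((q : K) • (FreeAlgebra.ι K a3 * FreeAlgebra.ι K c2))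
  -- localization at b₁ (tail 1, head 2) and b₃ (tail 3, head 1)
  | inv_b1_left : QRel K q (FreeAlgebra.ι K ib1 * FreeAlgebra.ι K b1) (FreeAlgebra.ι K e1)
  | inv_b1_right : QRel K q (FreeAlgebra.ι K b1 * FreeAlgebra.ι K ib1) (FreeAlgebra.ι K e2)
  | inv_b1_cor : QRel K q (FreeAlgebra.ι K ib1)
      (FreeAlgebra.ι K e1 * FreeAlgebra.ι K ib1 * FreeAlgebra.ι K e2)
  | inv_b3_left : QRel K q (FreeAlgebra.ι K ib3 * FreeAlgebra.ι K b3) (FreeAlgebra.ι K e3)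
  | inv_b3_right : QRel K q (FreeAlgebra.ι K b3 * FreeAlgebra.ι K ib3) (FreeAlgebra.ι K e1)
  | inv_b3_cor : QRel K q (FreeAlgebra.ι K ib3)
      (FreeAlgebra.ι K e3 * FreeAlgebra.ι K ib3 * FreeAlgebra.ι K e1)

/-- The localized quiver algebra `𝔸^q⟨b₁⁻¹, b₃⁻¹⟩`. -/
abbrev QAlg (K : Type) [CommRing K] (q : Kˣ) := RingQuot (QRel K q)

/-- The image of a generator in `𝔸^q⟨b₁⁻¹, b₃⁻¹⟩`. -/
def qel (K : Type) [CommRing K] (q : Kˣ) (x : QGen) : QAlg K q :=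
  RingQuot.mkAlgHom K (QRel K q) (FreeAlgebra.ι K x)


/-- The nine arrows of the quiver, with heads and tails
(`a₁,b₁,c₁ : 1 → 2`, `a₂,b₂,c₂ : 2 → 3`, `a₃,b₃,c₃ : 3 → 1`). -/
inductive Arrow : Type
  | a1 | a2 | a3 | b1 | b2 | b3 | c1 | c2 | c3
deriving DecidableEq

/-- Tail vertex of an arrow. -/
def Arrow.tl : Arrow → Fin 3
  | .a1 | .b1 | .c1 => 0
  | .a2 | .b2 | .c2 => 1
  | .a3 | .b3 | .c3 => 2

/-- Head vertex of an arrow. -/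
def Arrow.hd : Arrow → Fin 3
  | .a1 | .b1 | .c1 => 1
  | .a2 | .b2 | .c2 => 2
  | .a3 | .b3 | .c3 => 0

/-- The generator corresponding to an arrow. -/
def Arrow.toGen : Arrow → QGen
  | .a1 => QGen.a1
  | .a2 => QGen.a2
  | .a3 => QGen.a3
  | .b1 => QGen.b1
  | .b2 => QGen.b2
  | .b3 => QGen.b3
  | .c1 => QGen.c1
  | .c2 => QGen.c2
  | .c3 => QGen.c3

section

variable (K : Type) [CommRing K] (q : Kˣ)

/-- `F(g) = G₀₃(G₃₀(g)) ∈ 𝔸^q⟨b₁⁻¹,b₃⁻¹⟩`, obtained by substituting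
`z ↦ a₁b₁⁻¹`, `x ↦ c₁b₁⁻¹`, `w ↦ b₁b₃b₂` into the word `G₃₀(g)`. -/
def F : Arrow → QAlg K q
  | .a1 => qel K q QGen.a1 * qel K q QGen.ib1
  | .b1 => qel K q QGen.e2
  | .c1 => qel K q QGen.c1 * qel K q QGen.ib1
  | .a2 => (q : K) • ((qel K q QGen.b1 * qel K q QGen.b3 * qel K q QGen.b2)
      * (qel K q QGen.a1 * qel K q QGen.ib1))
  | .b2 => qel K q QGen.b1 * qel K q QGen.b3 * qel K q QGen.b2
  | .c2 => ((q⁻¹ : Kˣ) : K) • ((qel K q QGen.b1 * qel K q QGen.b3 * qel K q QGen.b2)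
      * (qel K q QGen.c1 * qel K q QGen.ib1))
  | .a3 => ((q⁻¹ : Kˣ) : K) • (qel K q QGen.a1 * qel K q QGen.ib1)
  | .b3 => qel K q QGen.e2
  | .c3 => (q : K) • (qel K q QGen.c1 * qel K q QGen.ib1)

/-- The gerbe terms `c₀₃₀`: `c₀₃₀(1) = b₁`, `c₀₃₀(2) = e₂`, `c₀₃₀(3) = b₁b₃`. -/
def c030 : Fin 3 → QAlg K q
  | 0 => qel K q QGen.b1
  | 1 => qel K q QGen.e2
  | 2 => qel K q QGen.b1 * qel K q QGen.b3

end

/-!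
Substituting into `G₃₀` replaces `z` by `a₁b₁⁻¹`, `x` by `c₁b₁⁻¹` and `w` by `b₁b₃b₂`, so every
identity reduces to cancelling `b₁⁻¹b₁ = e₁` against an arrow leaving vertex 1. Before that the
arrows `a₂, c₂` leaving vertex 2 are rewritten as `a₂ = q b₂a₁b₁⁻¹` and `c₂ = q⁻¹ b₂c₁b₁⁻¹` by
inserting `e₂ = b₁b₁⁻¹` and commuting `b₁` to the left with the superpotential relations, and
for `a₃, c₃` the relations `a₁b₃ = q b₁a₃` and `b₁c₃ = q c₁b₃` absorb the scalars.
-/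

section Corner

variable {M : Type*} [Semigroup M] {e g t : M}

theorem IsIdempotentElem.mul_left_eq_of_corner (he : IsIdempotentElem e) (hg : g = e * g * t) :
    e * g = g := by
  conv_lhs => rw [hg, ← mul_assoc, ← mul_assoc, he.eq]
  exact hg.symm

theorem IsIdempotentElem.mul_right_eq_of_corner (ht : IsIdempotentElem t) (hg : g = e * g * t) :
    g * t = g := by
  conv_lhs => rw [hg, mul_assoc, ht.eq]
  exact hg.symm

end Corner

namespace QAlg

variable {K : Type} [CommRing K] {q : Kˣ}

theorem qel_corner {g e t : QGen}
    (h : QRel K q (FreeAlgebra.ι K g)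
      (FreeAlgebra.ι K e * FreeAlgebra.ι K g * FreeAlgebra.ι K t)) :
    qel K q g = qel K q e * qel K q g * qel K q t := by
  simpa [qel] using RingQuot.mkAlgHom_rel K h

theorem isIdempotentElem_e1 : IsIdempotentElem (qel K q e1) := by
  simpa [IsIdempotentElem, qel] using RingQuot.mkAlgHom_rel K (QRel.idem e1 (q := q) (by simp))

theorem isIdempotentElem_e2 : IsIdempotentElem (qel K q e2) := by
  simpa [IsIdempotentElem, qel] using RingQuot.mkAlgHom_rel K (QRel.idem e2 (q := q) (by simp))

theorem ib1_mul_b1 : qel K q ib1 * qel K q b1 = qel K q e1 := by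
  simpa [qel] using RingQuot.mkAlgHom_rel K (QRel.inv_b1_left (q := q))

theorem b1_mul_ib1 : qel K q b1 * qel K q ib1 = qel K q e2 := by
  simpa [qel] using RingQuot.mkAlgHom_rel K (QRel.inv_b1_right (q := q))

theorem a1_mul_b3 : qel K q a1 * qel K q b3 = (q : K) • (qel K q b1 * qel K q a3) := by
  simpa [qel] using RingQuot.mkAlgHom_rel K (QRel.r2 (q := q))

theorem a2_mul_b1 : qel K q a2 * qel K q b1 = (q : K) • (qel K q b2 * qel K q a1) := by
  simpa [qel] using RingQuot.mkAlgHom_rel K (QRel.r3 (q := q))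

theorem b2_mul_c1 : qel K q b2 * qel K q c1 = (q : K) • (qel K q c2 * qel K q b1) := by
  simpa [qel] using RingQuot.mkAlgHom_rel K (QRel.r4 (q := q))

theorem b1_mul_c3 : qel K q b1 * qel K q c3 = (q : K) • (qel K q c1 * qel K q b3) := by
  simpa [qel] using RingQuot.mkAlgHom_rel K (QRel.r6 (q := q))

theorem e2_mul_a1 : qel K q e2 * qel K q a1 = qel K q a1 :=
  isIdempotentElem_e2.mul_left_eq_of_corner (qel_corner .cor_a1)

theorem e2_mul_b1 : qel K q e2 * qel K q b1 = qel K q b1 :=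
  isIdempotentElem_e2.mul_left_eq_of_corner (qel_corner .cor_b1)

theorem e2_mul_c1 : qel K q e2 * qel K q c1 = qel K q c1 :=
  isIdempotentElem_e2.mul_left_eq_of_corner (qel_corner .cor_c1)

theorem a1_mul_e1 : qel K q a1 * qel K q e1 = qel K q a1 :=
  isIdempotentElem_e1.mul_right_eq_of_corner (qel_corner .cor_a1)

theorem c1_mul_e1 : qel K q c1 * qel K q e1 = qel K q c1 :=
  isIdempotentElem_e1.mul_right_eq_of_corner (qel_corner .cor_c1)

theorem a2_mul_e2 : qel K q a2 * qel K q e2 = qel K q a2 :=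
  isIdempotentElem_e2.mul_right_eq_of_corner (qel_corner .cor_a2)

theorem b2_mul_e2 : qel K q b2 * qel K q e2 = qel K q b2 :=
  isIdempotentElem_e2.mul_right_eq_of_corner (qel_corner .cor_b2)

theorem c2_mul_e2 : qel K q c2 * qel K q e2 = qel K q c2 :=
  isIdempotentElem_e2.mul_right_eq_of_corner (qel_corner .cor_c2)

theorem ib1_mul_e2 : qel K q ib1 * qel K q e2 = qel K q ib1 :=
  isIdempotentElem_e2.mul_right_eq_of_corner (qel_corner .inv_b1_cor)

theorem mul_ib1_mul_b1 {x : QAlg K q} (hx : x * qel K q e1 = x) :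
    x * qel K q ib1 * qel K q b1 = x := by
  rw [mul_assoc, ib1_mul_b1, hx]

theorem mul_b1_mul_ib1 {x : QAlg K q} (hx : x * qel K q e2 = x) :
    x * qel K q b1 * qel K q ib1 = x := by
  rw [mul_assoc, b1_mul_ib1, hx]

theorem a2_eq : qel K q a2 = (q : K) • (qel K q b2 * (qel K q a1 * qel K q ib1)) := by
  conv_lhs => rw [← mul_b1_mul_ib1 a2_mul_e2, a2_mul_b1, smul_mul_assoc, mul_assoc]

theorem c2_eq :
    qel K q c2 = ((q⁻¹ : Kˣ) : K) • (qel K q b2 * (qel K q c1 * qel K q ib1)) := by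
  have h : qel K q c2 * qel K q b1 = q⁻¹ • (qel K q b2 * qel K q c1) := by
    rw [eq_inv_smul_iff, Units.smul_def, b2_mul_c1]
  conv_lhs => rw [← mul_b1_mul_ib1 c2_mul_e2, h, Units.smul_def, smul_mul_assoc, mul_assoc]

end QAlg

open QAlg in
/-- Gerbe terms for gluing quivers with different numbers of vertices:
for every arrow `g`, the gerbe identity `F(g) · c₀₃₀(t(g)) = c₀₃₀(h(g)) · g` holds in
`𝔸^q⟨b₁⁻¹, b₃⁻¹⟩` (equivalently `G₀₃ ∘ G₃₀(g) = c₀₃₀(h(g)) · g · c₀₃₀(t(g))⁻¹`). -/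
theorem gerbe_terms_for_gluing (K : Type) [CommRing K] (q : Kˣ) :
    ∀ g : Arrow, F K q g * c030 K q g.tl = c030 K q g.hd * qel K q g.toGen := by
  intro g
  cases g <;> simp only [F, c030, Arrow.tl, Arrow.hd, Arrow.toGen]
  case a1 => rw [mul_ib1_mul_b1 a1_mul_e1, e2_mul_a1]
  case c1 => rw [mul_ib1_mul_b1 c1_mul_e1, e2_mul_c1]
  case a2 =>
    rw [a2_eq]
    simp only [mul_assoc, smul_mul_assoc, mul_smul_comm, ib1_mul_e2]
  case b2 => rw [mul_assoc, b2_mul_e2]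
  case c2 =>
    rw [c2_eq]
    simp only [mul_assoc, smul_mul_assoc, mul_smul_comm, ib1_mul_e2]
  case a3 =>
    rw [← mul_assoc, smul_mul_assoc, mul_ib1_mul_b1 a1_mul_e1, smul_mul_assoc, a1_mul_b3,
      smul_smul, Units.inv_mul, one_smul]
  case b3 => rw [← mul_assoc, e2_mul_b1]
  case c3 =>
    rw [← mul_assoc, smul_mul_assoc, mul_ib1_mul_b1 c1_mul_e1, smul_mul_assoc, b1_mul_c3]
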